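/- arXiv:2210.14026 — 2 statements merged into one kernel-verified Lean document; each statement's English description precedes it below -/
import Mathlib

section
/- Let W^t, t = 1,...,T, be symmetric doubly stochastic n×n matrices and suppose ρ ∈ [0,1) satisfies max{|λ_2((W^t)ᵀ W^t)|, |λ_n((W^t)ᵀ W^t)|} ≤ ρ for all t. Then for every standard basis vector e_i and all T ≥ 0, ‖(1/n)·𝟙_n − (∏_{t=1}^T W^t) e_i‖² ≤ ((n−1)/n)·ρ^T. -/
/-!
Since the rows of every `W t` sum to one, the error `(1/n)𝟙 - P e_i` of the product `P` equals
`P ((1/n)𝟙 - e_i)`; since the columns sum to one, each factor preserves the hyperplane `𝟙ᗮ`,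
on which it multiplies the squared norm by at most `ρ`.
The squared norm of `(1/n)𝟙 - e_i` is `(n-1)/n`.
-/

open Matrix Finset

section Product

variable {M : Type*} [Monoid M]

/-- `backwardProd W T = W T * W (T - 1) * ⋯ * W 1`. -/
def backwardProd (W : ℕ → M) (T : ℕ) : M :=
  ((List.range T).map fun k => W (T - k)).prod

@[simp]
theorem backwardProd_zero (W : ℕ → M) : backwardProd W 0 = 1 := rfl

theorem backwardProd_succ (W : ℕ → M) (T : ℕ) :
    backwardProd W (T + 1) = W (T + 1) * backwardProd W T := by
  simp [backwardProd, List.range_succ_eq_map, List.map_map, Function.comp_def]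

end Product

section Stochastic

variable {R m : Type*} [CommSemiring R] [Fintype m] {A : Matrix m m R}

theorem mulVec_const_of_sum_row_eq_one (hrow : ∀ i, ∑ j, A i j = 1) (c : R) :
    A *ᵥ (fun _ => c) = fun _ => c := by
  ext i
  simp [mulVec, dotProduct, ← sum_mul, hrow]

theorem sum_mulVec_of_sum_col_eq_one (hcol : ∀ j, ∑ i, A i j = 1) (v : m → R) :
    ∑ i, (A *ᵥ v) i = ∑ i, v i := by
  simp only [mulVec, dotProduct]
  rw [sum_comm]
  simp [← sum_mul, hcol]

theorem mulVec_dotProduct_mulVec_self (A : Matrix m m R) (v : m → R) :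
    A *ᵥ v ⬝ᵥ A *ᵥ v = v ⬝ᵥ (Aᵀ * A) *ᵥ v := by
  rw [← mulVec_mulVec, dotProduct_mulVec v Aᵀ, vecMul_transpose]

variable [DecidableEq m] {W : ℕ → Matrix m m R}

theorem sum_backwardProd_mulVec (hcol : ∀ t j, ∑ i, W t i j = 1) (v : m → R) (T : ℕ) :
    ∑ i, (backwardProd W T *ᵥ v) i = ∑ i, v i := by
  induction T with
  | zero => simp
  | succ T ih =>
    rw [backwardProd_succ, ← mulVec_mulVec, sum_mulVec_of_sum_col_eq_one (hcol _), ih]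

theorem backwardProd_mulVec_const (hrow : ∀ t i, ∑ j, W t i j = 1) (c : R) (T : ℕ) :
    backwardProd W T *ᵥ (fun _ => c) = fun _ => c := by
  induction T with
  | zero => simp
  | succ T ih =>
    rw [backwardProd_succ, ← mulVec_mulVec, ih, mulVec_const_of_sum_row_eq_one (hrow _)]

end Stochastic

theorem backwardProd_mulVec_dotProduct_self_le {m : Type*} [Fintype m] [DecidableEq m]
    {W : ℕ → Matrix m m ℝ} {ρ : ℝ} (hρ : 0 ≤ ρ)
    (hcol : ∀ t j, ∑ i, W t i j = 1)
    (heig : ∀ t, ∀ v : m → ℝ, ∑ j, v j = 0 → |v ⬝ᵥ ((W t)ᵀ * W t) *ᵥ v| ≤ ρ * (v ⬝ᵥ v))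
    {v : m → ℝ} (hv : ∑ j, v j = 0) (T : ℕ) :
    backwardProd W T *ᵥ v ⬝ᵥ backwardProd W T *ᵥ v ≤ ρ ^ T * (v ⬝ᵥ v) := by
  induction T with
  | zero => simp
  | succ T ih =>
    set w := backwardProd W T *ᵥ v
    have hw : ∑ j, w j = 0 := (sum_backwardProd_mulVec hcol v T).trans hv
    calc backwardProd W (T + 1) *ᵥ v ⬝ᵥ backwardProd W (T + 1) *ᵥ v
        = w ⬝ᵥ ((W (T + 1))ᵀ * W (T + 1)) *ᵥ w := by
          rw [backwardProd_succ, ← mulVec_mulVec, mulVec_dotProduct_mulVec_self]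
      _ ≤ ρ * (w ⬝ᵥ w) := (le_abs_self _).trans (heig _ w hw)
      _ ≤ ρ * (ρ ^ T * (v ⬝ᵥ v)) := mul_le_mul_of_nonneg_left ih hρ
      _ = ρ ^ (T + 1) * (v ⬝ᵥ v) := by ring

theorem sum_sq_inv_card_sub_single {n : ℕ} (hn : 0 < n) (i : Fin n) :
    ∑ j, (1 / (n : ℝ) - (Pi.single i 1 : Fin n → ℝ) j) ^ 2 = ((n : ℝ) - 1) / n := by
  rw [← add_sum_erase _ _ (mem_univ i), Pi.single_eq_same,
    sum_congr rfl fun j hj => by rw [Pi.single_eq_of_ne (ne_of_mem_erase hj)], sum_const,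
    card_erase_of_mem (mem_univ i), card_univ, Fintype.card_fin, nsmul_eq_mul,
    Nat.cast_sub hn]
  field_simp
  ring

theorem product_doubly_stochastic_consensus_bound_general
    (n T : ℕ) (hn : 0 < n) (W : ℕ → Matrix (Fin n) (Fin n) ℝ) (ρ : ℝ)
    (hρ0 : 0 ≤ ρ)
    (hcol : ∀ t j, ∑ i, W t i j = 1)
    (hrow : ∀ t i, ∑ j, W t i j = 1)
    (heig : ∀ t, ∀ v : Fin n → ℝ, (∑ j, v j = 0) →
      |v ⬝ᵥ (((W t)ᵀ * W t).mulVec v)| ≤ ρ * (v ⬝ᵥ v))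
    (i : Fin n) :
    ∑ j, ((1 / (n : ℝ)) -
        (((List.range T).map (fun k => W (T - k))).prod.mulVec
          (Pi.single i 1 : Fin n → ℝ)) j) ^ 2
      ≤ (((n : ℝ) - 1) / n) * ρ ^ T := by
  set v : Fin n → ℝ := (fun _ => 1 / (n : ℝ)) - Pi.single i 1
  have hv : ∑ j, v j = 0 := by simp [v, sum_sub_distrib, hn.ne']
  have herr : (fun _ => 1 / (n : ℝ)) - backwardProd W T *ᵥ Pi.single i 1
      = backwardProd W T *ᵥ v := by
    rw [mulVec_sub, backwardProd_mulVec_const hrow]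
  calc _ = backwardProd W T *ᵥ v ⬝ᵥ backwardProd W T *ᵥ v := by
        simp only [← herr, dotProduct, sq]; rfl
    _ ≤ ρ ^ T * (v ⬝ᵥ v) := backwardProd_mulVec_dotProduct_self_le hρ0 hcol heig hv T
    _ = ((n : ℝ) - 1) / n * ρ ^ T := by
        rw [← sum_sq_inv_card_sub_single hn i, mul_comm]
        simp only [v, dotProduct, sq, Pi.sub_apply]

/-- for symmetric doubly stochastic matrices `W t` whose matrices
`(W t)ᵀ (W t)` have all eigenvalues on the orthogonal complement of the all-ones
vector bounded by `ρ` in absolute value (i.e. `max {|λ₂|, |λₙ|} ≤ ρ`), the squared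
distance of `(∏_{t=1}^T W t) eᵢ` from the uniform vector decays like `ρ^T`. -/
theorem product_doubly_stochastic_consensus_bound
    (n T : ℕ) (hn : 0 < n) (W : ℕ → Matrix (Fin n) (Fin n) ℝ) (ρ : ℝ)
    (hρ0 : 0 ≤ ρ) (hρ1 : ρ < 1)
    (hsymm : ∀ t, (W t).IsSymm)
    (hnonneg : ∀ t i j, 0 ≤ W t i j)
    (hcol : ∀ t j, ∑ i, W t i j = 1)
    (hrow : ∀ t i, ∑ j, W t i j = 1)
    (heig : ∀ t, ∀ v : Fin n → ℝ, (∑ j, v j = 0) →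
      |v ⬝ᵥ (((W t)ᵀ * W t).mulVec v)| ≤ ρ * (v ⬝ᵥ v))
    (i : Fin n) :
    ∑ j, ((1 / (n : ℝ)) -
        (((List.range T).map (fun k => W (T - k))).prod.mulVec
          (Pi.single i 1 : Fin n → ℝ)) j) ^ 2
      ≤ (((n : ℝ) - 1) / n) * ρ ^ T :=
  product_doubly_stochastic_consensus_bound_general n T hn W ρ hρ0 hcol hrow heig i
end

section
/- Let f_1,...,f_n : ℝ^d → ℝ be L-smooth, p a probability vector, and suppose E_{i∼p}‖∇f(x) − ∇f_i(x)‖² ≤ ζ² for all x, where f = Σ_i p_i f_i. Then for any points x_1,...,x_n ∈ ℝ^d with average x̄ = (1/n)Σ_i x_i (or any fixed x̄), Σ_{i=1}^n p_i ‖∇f_i(x_i)‖² ≤ 2‖Σ_{i=1}^n p_i ∇f_i(x_i)‖² + 12 L² Σ_{i=1}^n p_i ‖x̄ − x_i‖² + 6ζ². -/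
open Finset
open scoped RealInnerProductSpace

/-! With `g = ∇f(x̄)`, the weighted second moment of the vectors `∇fᵢ(xᵢ)` is at most the squared
norm of their weighted mean plus their weighted spread about `g` (bias–variance decomposition),
and passing through `∇fᵢ(x̄)` gives `‖∇fᵢ(xᵢ) - g‖² ≤ 2L²‖x̄ - xᵢ‖² + 2ζ²`. This even yields the
bound with constants `1, 2, 2` in place of `2, 12, 6`. -/

section WeightedVariance

variable {ι E : Type*} [NormedAddCommGroup E] [InnerProductSpace ℝ E]
  {s : Finset ι} {p : ι → ℝ}

theorem sum_mul_norm_sub_sq_eq (hp : ∑ i ∈ s, p i = 1) (v : ι → E) (g : E) :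
    ∑ i ∈ s, p i * ‖v i - g‖ ^ 2
      = ∑ i ∈ s, p i * ‖v i‖ ^ 2 - ‖∑ i ∈ s, p i • v i‖ ^ 2
        + ‖∑ i ∈ s, p i • v i - g‖ ^ 2 := by
  have hinner : ⟪∑ i ∈ s, p i • v i, g⟫ = ∑ i ∈ s, p i * ⟪v i, g⟫ := by
    simp only [sum_inner, real_inner_smul_left]
  simp only [norm_sub_sq_real, hinner, mul_add, mul_sub, sum_add_distrib, sum_sub_distrib,
    ← sum_mul, hp, mul_left_comm _ (2 : ℝ), ← mul_sum]
  ring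

theorem sum_mul_norm_sq_le (hp : ∑ i ∈ s, p i = 1) (v : ι → E) (g : E) :
    ∑ i ∈ s, p i * ‖v i‖ ^ 2
      ≤ ‖∑ i ∈ s, p i • v i‖ ^ 2 + ∑ i ∈ s, p i * ‖v i - g‖ ^ 2 := by
  rw [sum_mul_norm_sub_sq_eq hp]
  linarith [sq_nonneg ‖∑ i ∈ s, p i • v i - g‖]

end WeightedVariance

theorem norm_sub_sq_le_two_mul {E : Type*} [SeminormedAddCommGroup E] (a b c : E) :
    ‖a - b‖ ^ 2 ≤ 2 * (‖a - c‖ ^ 2 + ‖c - b‖ ^ 2) :=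
  (pow_le_pow_left₀ (norm_nonneg _) (norm_sub_le_norm_sub_add_norm_sub a c b) 2).trans add_sq_le

theorem gradient_second_moment_bound_general
    {d n : ℕ} (L ζ : ℝ) (p : Fin n → ℝ)
    (f : Fin n → EuclideanSpace ℝ (Fin d) → ℝ)
    (hp0 : ∀ i, 0 ≤ p i) (hp1 : ∑ i, p i = 1)
    (hL : ∀ i x y, ‖gradient (f i) x - gradient (f i) y‖ ≤ L * ‖x - y‖)
    (hζ : ∀ i x, ‖gradient (fun y => ∑ j, p j * f j y) x - gradient (f i) x‖ ^ 2 ≤ ζ ^ 2)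
    (x : Fin n → EuclideanSpace ℝ (Fin d)) (xbar : EuclideanSpace ℝ (Fin d)) :
    ∑ i, p i * ‖gradient (f i) (x i)‖ ^ 2
      ≤ 2 * ‖∑ i, p i • gradient (f i) (x i)‖ ^ 2
        + 12 * L ^ 2 * ∑ i, p i * ‖xbar - x i‖ ^ 2 + 6 * ζ ^ 2 := by
  set g := gradient (fun y => ∑ j, p j * f j y) xbar
  have hdev : ∀ i, ‖gradient (f i) (x i) - g‖ ^ 2 ≤ 2 * (L ^ 2 * ‖xbar - x i‖ ^ 2 + ζ ^ 2) := by
    intro i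
    have hsmooth : ‖gradient (f i) (x i) - gradient (f i) xbar‖ ^ 2 ≤ L ^ 2 * ‖xbar - x i‖ ^ 2 := by
      rw [← mul_pow, norm_sub_rev xbar]
      exact pow_le_pow_left₀ (norm_nonneg _) (hL i (x i) xbar) 2
    have hhet : ‖gradient (f i) xbar - g‖ ^ 2 ≤ ζ ^ 2 := by
      rw [norm_sub_rev]; exact hζ i xbar
    exact (norm_sub_sq_le_two_mul _ _ _).trans (by gcongr)
  have hdev_avg : ∑ i, p i * ‖gradient (f i) (x i) - g‖ ^ 2
      ≤ 2 * (L ^ 2 * ∑ i, p i * ‖xbar - x i‖ ^ 2 + ζ ^ 2) :=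
    calc ∑ i, p i * ‖gradient (f i) (x i) - g‖ ^ 2
        ≤ ∑ i, p i * (2 * (L ^ 2 * ‖xbar - x i‖ ^ 2 + ζ ^ 2)) :=
          sum_le_sum fun i _ => mul_le_mul_of_nonneg_left (hdev i) (hp0 i)
      _ = 2 * L ^ 2 * ∑ i, p i * ‖xbar - x i‖ ^ 2 + (∑ i, p i) * (2 * ζ ^ 2) := by
          rw [mul_sum, sum_mul, ← sum_add_distrib]
          exact sum_congr rfl fun i _ => by ring
      _ = 2 * (L ^ 2 * ∑ i, p i * ‖xbar - x i‖ ^ 2 + ζ ^ 2) := by rw [hp1]; ring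
  have hspread : 0 ≤ L ^ 2 * ∑ i, p i * ‖xbar - x i‖ ^ 2 :=
    mul_nonneg (sq_nonneg L) (sum_nonneg fun i _ => mul_nonneg (hp0 i) (sq_nonneg _))
  linarith [sum_mul_norm_sq_le hp1 (fun i => gradient (f i) (x i)) g,
    sq_nonneg ‖∑ i, p i • gradient (f i) (x i)‖, sq_nonneg ζ]

/-- under L-smoothness of each fᵢ and bounded inter-client
gradient variance ζ², for any points x₁,…,xₙ and any fixed x̄,
Σᵢ pᵢ ‖∇fᵢ(xᵢ)‖² ≤ 2‖Σᵢ pᵢ ∇fᵢ(xᵢ)‖² + 12 L² Σᵢ pᵢ ‖x̄ − xᵢ‖² + 6ζ². -/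
theorem gradient_second_moment_bound
    {d n : ℕ} (L ζ : ℝ) (p : Fin n → ℝ)
    (f : Fin n → EuclideanSpace ℝ (Fin d) → ℝ)
    (hp0 : ∀ i, 0 ≤ p i) (hp1 : ∑ i, p i = 1)
    (hdiff : ∀ i, Differentiable ℝ (f i))
    (hL : ∀ i x y, ‖gradient (f i) x - gradient (f i) y‖ ≤ L * ‖x - y‖)
    (hζ : ∀ i x, ‖gradient (fun y => ∑ j, p j * f j y) x - gradient (f i) x‖ ^ 2 ≤ ζ ^ 2)
    (x : Fin n → EuclideanSpace ℝ (Fin d)) (xbar : EuclideanSpace ℝ (Fin d)) :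
    ∑ i, p i * ‖gradient (f i) (x i)‖ ^ 2
      ≤ 2 * ‖∑ i, p i • gradient (f i) (x i)‖ ^ 2
        + 12 * L ^ 2 * ∑ i, p i * ‖xbar - x i‖ ^ 2 + 6 * ζ ^ 2 :=
  gradient_second_moment_bound_general L ζ p f hp0 hp1 hL hζ x xbar
end
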